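/- arXiv:1909.10242 — 2 statements merged into one kernel-verified Lean document; each statement's English description precedes it below -/
import Mathlib

section
/- Let (V,q) be a finite weighted graph satisfying CD(0,∞) and let (u_t) solve ∂_t u_t = Δu_t + Γu_t with u_0 ≤ 0 and Γu_0 ≤ q_min/2. Then for all t > 0, Γu_t ≤ −u_t/t pointwise. -/
open Finset Real

/-- Graph Laplacian on a finite weighted graph. -/
noncomputable def glap {V : Type*} [Fintype V] (q : V → V → ℝ) (f : V → ℝ) (x : V) : ℝ :=
  ∑ y, q x y * (f y - f x)

/-- Carré du champ operator Γ(f,g). -/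
noncomputable def gGammaBil {V : Type*} [Fintype V] (q : V → V → ℝ) (f g : V → ℝ) (x : V) : ℝ :=
  (1 / 2) * ∑ y, q x y * (f y - f x) * (g y - g x)

/-- Carré du champ Γf = Γ(f,f). -/
noncomputable def gGamma {V : Type*} [Fintype V] (q : V → V → ℝ) (f : V → ℝ) (x : V) : ℝ :=
  gGammaBil q f f x

/-- Iterated carré du champ Γ₂f = (ΔΓf − 2Γ(f,Δf))/2. -/
noncomputable def gGammaTwo {V : Type*} [Fintype V] (q : V → V → ℝ) (f : V → ℝ) (x : V) : ℝ :=
  (glap q (gGamma q f) x - 2 * gGammaBil q f (glap q f) x) / 2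


section helpersHamilton
variable {V : Type*} [Fintype V]

lemma two_gGammaBil_eq (q : V → V → ℝ) (f g : V → ℝ) (x : V) :
    2 * gGammaBil q f g x = ∑ y, q x y * (f y - f x) * (g y - g x) := by
  simp only [gGammaBil]; ring

lemma gGamma_nonneg (q : V → V → ℝ) (hq : ∀ x y, 0 ≤ q x y) (f : V → ℝ) (x : V) :
    0 ≤ gGamma q f x := by
  simp only [gGamma, gGammaBil]
  apply mul_nonneg (by norm_num)
  apply Finset.sum_nonneg
  intro y _
  have : q x y * (f y - f x) * (f y - f x) = q x y * (f y - f x) ^ 2 := by ring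
  rw [this]; exact mul_nonneg (hq x y) (sq_nonneg _)

lemma delta_sq_le (q : V → V → ℝ) (hq : ∀ x y, 0 ≤ q x y) (f : V → ℝ) (x y : V) :
    q x y * (f y - f x) ^ 2 ≤ 2 * gGamma q f x := by
  rw [gGamma, two_gGammaBil_eq]
  have : q x y * (f y - f x) ^ 2 = q x y * (f y - f x) * (f y - f x) := by ring
  rw [this]
  refine Finset.single_le_sum (f := fun z => q x z * (f z - f x) * (f z - f x))
    (fun z _ => ?_) (Finset.mem_univ y)
  show 0 ≤ q x z * (f z - f x) * (f z - f x)
  nlinarith [hq x z, sq_nonneg (f z - f x)]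

lemma CD_ineq (q : V → V → ℝ) (hCD : ∀ f : V → ℝ, ∀ x, 0 ≤ gGammaTwo q f x) (f : V → ℝ) (x : V) :
    2 * gGammaBil q f (glap q f) x ≤ glap q (gGamma q f) x := by
  have := hCD f x
  simp only [gGammaTwo] at this
  linarith

lemma bil_split (q : V → V → ℝ) (f g h : V → ℝ) (x : V) :
    gGammaBil q f (fun z => g z + h z) x = gGammaBil q f g x + gGammaBil q f h x := by
  simp only [gGammaBil, ← mul_add, ← Finset.sum_add_distrib]
  congr 1
  exact Finset.sum_congr rfl fun y _ => by ring


lemma two_gGamma_eq (q : V → V → ℝ) (f : V → ℝ) (x : V) :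
    2 * gGamma q f x = ∑ y, q x y * (f y - f x) * (f y - f x) := by
  rw [gGamma, two_gGammaBil_eq]

lemma keyA (q : V → V → ℝ) (hq : ∀ x y, 0 ≤ q x y) (qmin : ℝ) (hqmin_pos : 0 < qmin)
    (hqmin : ∀ x y, 0 < q x y → qmin ≤ q x y)
    (hCD : ∀ f : V → ℝ, ∀ x, 0 ≤ gGammaTwo q f x)
    (a : V → ℝ) (x : V) (η : ℝ) (hη0 : 0 < η) (hη1 : η ≤ 1)
    (hgx : gGamma q a x = qmin / 2 + η) (hmax : ∀ y, gGamma q a y ≤ gGamma q a x) :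
    2 * gGammaBil q a (fun z => glap q a z + gGamma q a z) x ≤
      ((∑ x', ∑ y, q x' y) * ((qmin / 2 + 1) / qmin)) * η := by
  have hsplit : 2 * gGammaBil q a (fun z => glap q a z + gGamma q a z) x
      = 2 * gGammaBil q a (glap q a) x + 2 * gGammaBil q a (gGamma q a) x := by
    rw [bil_split]; ring
  have hCD' := CD_ineq q hCD a x
  have hid : glap q (gGamma q a) x + 2 * gGammaBil q a (gGamma q a) x
      = ∑ y, q x y * ((1 + (a y - a x)) * (gGamma q a y - gGamma q a x)) := by
    rw [two_gGammaBil_eq, glap, ← Finset.sum_add_distrib]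
    exact Finset.sum_congr rfl fun y _ => by ring
  set m : ℝ := η / qmin with hm_def
  have hm : 0 < m := div_pos hη0 hqmin_pos
  have hterm : ∀ y, q x y * ((1 + (a y - a x)) * (gGamma q a y - gGamma q a x))
      ≤ q x y * (((qmin / 2 + 1) / qmin) * η) := by
    intro y
    rcases eq_or_lt_of_le (hq x y) with h0 | hpos
    · rw [← h0]; simp
    · have hql := hqmin x y hpos
      have hd := delta_sq_le q hq a x y
      -- (a y - a x)^2 ≤ 2 g x / qmin = 1 + 2m
      have hsq : qmin * (a y - a x) ^ 2 ≤ 2 * gGamma q a x := by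
        nlinarith [sq_nonneg (a y - a x)]
      have hsq2 : (a y - a x) ^ 2 ≤ (1 + m) ^ 2 := by
        have h1 : qmin * (a y - a x) ^ 2 ≤ qmin + 2 * η := by rw [hgx] at hsq; linarith
        have h2 : qmin * m = η := by rw [hm_def]; field_simp [hqmin_pos.ne']
        nlinarith [sq_nonneg m, hm.le]
      have hdl : -(1 + m) ≤ a y - a x := by
        nlinarith [sq_nonneg (a y - a x + (1 + m))]
      have hgy : gGamma q a y ≤ gGamma q a x := hmax y
      have hgy0 : 0 ≤ gGamma q a y := gGamma_nonneg q hq a y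
      have hstep : (1 + (a y - a x)) * (gGamma q a y - gGamma q a x)
          ≤ m * (gGamma q a x - gGamma q a y) := by
        nlinarith [mul_nonneg (sub_nonneg.2 hgy) (by linarith : (0:ℝ) ≤ 1 + (a y - a x) + m)]
      have hstep2 : m * (gGamma q a x - gGamma q a y) ≤ m * (qmin / 2 + 1) := by
        apply mul_le_mul_of_nonneg_left _ hm.le
        rw [hgx]; linarith
      have heq : ((qmin / 2 + 1) / qmin) * η = m * (qmin / 2 + 1) := by
        rw [hm_def]; ring
      refine mul_le_mul_of_nonneg_left ?_ (hq x y)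
      rw [heq]; linarith
  have hrow : (∑ y, q x y) ≤ ∑ x', ∑ y, q x' y :=
    Finset.single_le_sum (f := fun x' => ∑ y, q x' y)
      (fun x' _ => Finset.sum_nonneg fun y _ => hq x' y) (Finset.mem_univ x)
  have hc : 0 ≤ ((qmin / 2 + 1) / qmin) * η := by positivity
  calc 2 * gGammaBil q a (fun z => glap q a z + gGamma q a z) x
      ≤ glap q (gGamma q a) x + 2 * gGammaBil q a (gGamma q a) x := by
        rw [hsplit]; linarith
    _ = ∑ y, q x y * ((1 + (a y - a x)) * (gGamma q a y - gGamma q a x)) := hid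
    _ ≤ ∑ y, q x y * (((qmin / 2 + 1) / qmin) * η) :=
        Finset.sum_le_sum fun y _ => hterm y
    _ = (∑ y, q x y) * (((qmin / 2 + 1) / qmin) * η) := by rw [← Finset.sum_mul]
    _ ≤ (∑ x', ∑ y, q x' y) * (((qmin / 2 + 1) / qmin) * η) :=
        mul_le_mul_of_nonneg_right hrow hc
    _ = ((∑ x', ∑ y, q x' y) * ((qmin / 2 + 1) / qmin)) * η := by ring

lemma keyB (q : V → V → ℝ) (hq : ∀ x y, 0 ≤ q x y) (qmin : ℝ) (hqmin_pos : 0 < qmin)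
    (hqmin : ∀ x y, 0 < q x y → qmin ≤ q x y)
    (hCD : ∀ f : V → ℝ, ∀ x, 0 ≤ gGammaTwo q f x)
    (a : V → ℝ) (t : ℝ) (ht : 0 ≤ t) (x : V)
    (hg : ∀ z, gGamma q a z ≤ qmin / 2)
    (hmax : ∀ y, t * gGamma q a y + a y ≤ t * gGamma q a x + a x) :
    gGamma q a x + t * (2 * gGammaBil q a (fun z => glap q a z + gGamma q a z) x)
      + (glap q a x + gGamma q a x) ≤ 0 := by
  have hsplit : 2 * gGammaBil q a (fun z => glap q a z + gGamma q a z) x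
      = 2 * gGammaBil q a (glap q a) x + 2 * gGammaBil q a (gGamma q a) x := by
    rw [bil_split]; ring
  have hCD' := CD_ineq q hCD a x
  have hid : glap q a x + 2 * gGamma q a x
        + (t * glap q (gGamma q a) x + t * (2 * gGammaBil q a (gGamma q a) x))
      = ∑ y, q x y * ((1 + (a y - a x))
          * ((t * gGamma q a y + a y) - (t * gGamma q a x + a x))) := by
    rw [two_gGamma_eq, two_gGammaBil_eq, glap, glap, Finset.mul_sum, Finset.mul_sum,
      ← Finset.sum_add_distrib, ← Finset.sum_add_distrib, ← Finset.sum_add_distrib]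
    exact Finset.sum_congr rfl fun y _ => by ring
  have hterm : ∀ y, q x y * ((1 + (a y - a x))
      * ((t * gGamma q a y + a y) - (t * gGamma q a x + a x))) ≤ 0 := by
    intro y
    rcases eq_or_lt_of_le (hq x y) with h0 | hpos
    · rw [← h0]; simp
    · have hql := hqmin x y hpos
      have hd := delta_sq_le q hq a x y
      have hgx := hg x
      have hsq : (a y - a x) ^ 2 ≤ 1 := by nlinarith [sq_nonneg (a y - a x)]
      have h1δ : 0 ≤ 1 + (a y - a x) := by nlinarith [sq_nonneg (a y - a x + 1)]
      have hFy : (t * gGamma q a y + a y) - (t * gGamma q a x + a x) ≤ 0 :=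
        sub_nonpos.2 (hmax y)
      exact mul_nonpos_of_nonneg_of_nonpos (hq x y)
        (mul_nonpos_of_nonneg_of_nonpos h1δ hFy)
  have hsum : ∑ y, q x y * ((1 + (a y - a x))
      * ((t * gGamma q a y + a y) - (t * gGamma q a x + a x))) ≤ 0 :=
    Finset.sum_nonpos fun y _ => hterm y
  have htCD : t * (2 * gGammaBil q a (glap q a) x) ≤ t * glap q (gGamma q a) x :=
    mul_le_mul_of_nonneg_left hCD' ht
  have hexp : t * (2 * gGammaBil q a (fun z => glap q a z + gGamma q a z) x)
      = t * (2 * gGammaBil q a (glap q a) x) + t * (2 * gGammaBil q a (gGamma q a) x) := by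
    rw [hsplit]; ring
  linarith


open Filter Topology Set in
lemma maxPrinciple {ι : Type*} [Fintype ι] [Nonempty ι] {T : ℝ}
    (f d : ι → ℝ → ℝ) (B B' : ℝ → ℝ)
    (hfd : ∀ i, ∀ t ∈ Set.Ici (0:ℝ), HasDerivWithinAt (f i) (d i t) (Set.Ici 0) t)
    (hB : ∀ t, HasDerivAt B (B' t) t)
    (h0 : ∀ i, f i 0 ≤ B 0)
    (hbound : ∀ t ∈ Set.Ico (0:ℝ) T, ∀ i, f i t = B t → (∀ j, f j t ≤ f i t) → d i t < B' t)
    {t : ℝ} (ht : t ∈ Set.Icc 0 T) (i : ι) : f i t ≤ B t := by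
  set φ : ℝ → ℝ := fun s => Finset.univ.sup' Finset.univ_nonempty (fun j => f j s) with hφ
  have hle : ∀ j s, f j s ≤ φ s := fun j s => Finset.le_sup' (fun j => f j s) (Finset.mem_univ j)
  have hne : ∀ s : ℝ, (Finset.univ.filter fun j => f j s = φ s).Nonempty := by
    intro s
    obtain ⟨j, _, hj⟩ := Finset.exists_mem_eq_sup' Finset.univ_nonempty (fun j => f j s)
    exact ⟨j, Finset.mem_filter.mpr ⟨Finset.mem_univ j, hj.symm⟩⟩
  set D : ℝ → ℝ := fun s =>
    (Finset.univ.filter fun j => f j s = φ s).sup' (hne s) (fun j => d j s) with hD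
  have hφcont : ContinuousOn φ (Set.Icc 0 T) :=
    ContinuousOn.finset_sup'_apply Finset.univ_nonempty fun j _ =>
      ContinuousOn.mono (s := Set.Ici 0)
        (fun s hs => (hfd j s hs).continuousWithinAt) (fun z hz => hz.1)
  have hslope : ∀ s ∈ Set.Ico (0:ℝ) T, ∀ r, D s < r →
      ∃ᶠ z in 𝓝[>] s, slope φ s z < r := by
    intro s hs r hr
    have hs0 : (0:ℝ) ≤ s := hs.1
    have hev : ∀ j : ι, ∀ᶠ z in 𝓝[>] s, f j z < φ s + r * (z - s) := by
      intro j
      rcases eq_or_lt_of_le (hle j s) with hjm | hjm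
      · have hjfilter : j ∈ Finset.univ.filter fun k => f k s = φ s :=
          Finset.mem_filter.mpr ⟨Finset.mem_univ j, hjm⟩
        have hdj : d j s < r := lt_of_le_of_lt (Finset.le_sup' (fun k => d k s) hjfilter) hr
        have hder : HasDerivWithinAt (f j) (d j s) (Set.Ici s) s :=
          (hfd j s hs0).mono (Set.Ici_subset_Ici.mpr hs0)
        have hsl : Filter.Tendsto (slope (f j) s) (𝓝[>] s) (𝓝 (d j s)) :=
          (hasDerivWithinAt_iff_tendsto_slope.1 hder).mono_left
            (nhdsWithin_mono s fun z hz => ⟨Set.mem_Ici.2 (le_of_lt (Set.mem_Ioi.1 hz)), hz.ne'⟩)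
        filter_upwards [hsl.eventually_lt_const hdj, self_mem_nhdsWithin] with z hz hz'
        have hzs : 0 < z - s := sub_pos.2 hz'
        rw [slope_def_field, div_lt_iff₀ hzs] at hz
        have : f j z < f j s + r * (z - s) := by linarith
        rwa [hjm] at this
      · have h1 : Filter.Tendsto (f j) (𝓝[>] s) (𝓝 (f j s)) :=
          ((hfd j s hs0).continuousWithinAt.tendsto).mono_left
            (nhdsWithin_mono s fun z hz => hs0.trans hz.le)
        have h2 : Filter.Tendsto (fun z => φ s + r * (z - s)) (𝓝[>] s)
            (𝓝 (φ s + r * (s - s))) :=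
          ((continuous_const.add (continuous_const.mul
            (continuous_id.sub continuous_const))).tendsto s).mono_left nhdsWithin_le_nhds
        have h3 : f j s - (φ s + r * (s - s)) < 0 := by
          simp only [sub_self, mul_zero, add_zero]; linarith
        filter_upwards [(h1.sub h2).eventually_lt_const h3] with z hz
        linarith
    have hall : ∀ᶠ z in 𝓝[>] s, ∀ j, f j z < φ s + r * (z - s) := Filter.eventually_all.2 hev
    refine Filter.Eventually.frequently ?_
    filter_upwards [hall, self_mem_nhdsWithin] with z hz hz'
    have hzs : 0 < z - s := sub_pos.2 hz'
    rw [slope_def_field, div_lt_iff₀ hzs]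
    have hφz : φ z < φ s + r * (z - s) := (Finset.sup'_lt_iff Finset.univ_nonempty).2 fun j _ => hz j
    linarith
  have hbd : ∀ s ∈ Set.Ico (0:ℝ) T, φ s = B s → D s < B' s := by
    intro s hs hcontact
    rw [hD]
    refine (Finset.sup'_lt_iff (hne s)).2 fun j hj => ?_
    rw [Finset.mem_filter] at hj
    exact hbound s hs j (hj.2.trans hcontact) fun k => (hle k s).trans_eq hj.2.symm
  have main : ∀ ⦃s⦄, s ∈ Set.Icc (0:ℝ) T → φ s ≤ B s :=
    image_le_of_liminf_slope_right_lt_deriv_boundary' (f' := D) hφcont hslope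
      (Finset.sup'_le _ _ fun j _ => h0 j)
      (fun s _ => (hB s).continuousAt.continuousWithinAt)
      (fun s _ => (hB s).hasDerivWithinAt) hbd
  exact (hle i t).trans (main ht)


lemma hasDeriv_gGamma (q : V → V → ℝ) (u : ℝ → V → ℝ)
    (hu : ∀ t ∈ Set.Ici (0 : ℝ), ∀ x, HasDerivWithinAt (fun s => u s x)
      (glap q (u t) x + gGamma q (u t) x) (Set.Ici 0) t)
    (t : ℝ) (ht : t ∈ Set.Ici (0:ℝ)) (x : V) :
    HasDerivWithinAt (fun s => gGamma q (u s) x)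
      (2 * gGammaBil q (u t) (fun z => glap q (u t) z + gGamma q (u t) z) x)
      (Set.Ici 0) t := by
  set w : V → ℝ := fun z => glap q (u t) z + gGamma q (u t) z with hw
  have key : ∀ y : V, HasDerivWithinAt
      (fun s => q x y * (u s y - u s x) * (u s y - u s x))
      (q x y * (w y - w x) * (u t y - u t x) + q x y * (u t y - u t x) * (w y - w x))
      (Set.Ici 0) t := by
    intro y
    have hy := (hu t ht y).sub (hu t ht x)
    exact (hy.const_mul (q x y)).mul hy
  have hsum := HasDerivWithinAt.sum (u := Finset.univ) fun y _ => key y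
  have h2 := hsum.const_mul (1/2 : ℝ)
  have hfun : (fun s => (1/2 : ℝ) * ∑ y, q x y * (u s y - u s x) * (u s y - u s x))
      = fun s => gGamma q (u s) x := by
    funext s; simp [gGamma, gGammaBil]
  have hder : (1/2 : ℝ) * ∑ y, (q x y * (w y - w x) * (u t y - u t x)
        + q x y * (u t y - u t x) * (w y - w x))
      = 2 * gGammaBil q (u t) w x := by
    rw [two_gGammaBil_eq, Finset.mul_sum]
    exact Finset.sum_congr rfl fun y _ => by ring
  rw [← hfun, ← hder]
  simpa only [Finset.sum_apply] using h2

end helpersHamilton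

/-- Hamilton gradient estimate under CD(0,∞): Γu_t ≤ −u_t/t. -/
theorem hamilton_estimate_CD_zero_infty {V : Type*} [Fintype V] (q : V → V → ℝ)
    (hq : ∀ x y, 0 ≤ q x y) (hdiag : ∀ x, q x x = 0) (qmin : ℝ)
    (hqmin_pos : 0 < qmin) (hqmin : ∀ x y, 0 < q x y → qmin ≤ q x y)
    (hCD : ∀ f : V → ℝ, ∀ x, 0 ≤ gGammaTwo q f x)
    (u : ℝ → V → ℝ)
    (hu : ∀ t ∈ Set.Ici (0 : ℝ), ∀ x, HasDerivWithinAt (fun s => u s x)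
      (glap q (u t) x + gGamma q (u t) x) (Set.Ici 0) t)
    (hneg : ∀ x, u 0 x ≤ 0)
    (h0 : ∀ x, gGamma q (u 0) x ≤ qmin / 2) :
    ∀ t : ℝ, 0 < t → ∀ x, gGamma q (u t) x ≤ -(u t x) / t := by
  intro t ht x
  haveI : Nonempty V := ⟨x⟩
  set S : ℝ := ∑ x', ∑ y, q x' y with hS
  have hS0 : 0 ≤ S := Finset.sum_nonneg fun _ _ => Finset.sum_nonneg fun _ _ => hq _ _
  set C : ℝ := S * ((qmin / 2 + 1) / qmin) + 1 with hC
  have hC1 : (1:ℝ) ≤ C := by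
    rw [hC]
    have : 0 ≤ S * ((qmin / 2 + 1) / qmin) := by positivity
    linarith
  have hG : ∀ s ∈ Set.Ici (0:ℝ), ∀ z, HasDerivWithinAt (fun r => gGamma q (u r) z)
      (2 * gGammaBil q (u s) (fun y => glap q (u s) y + gGamma q (u s) y) z)
      (Set.Ici 0) s := fun s hs z => hasDeriv_gGamma q u hu s hs z
  -- Step 1: Γu_t ≤ qmin/2 for all times
  have gbound : ∀ s ∈ Set.Ici (0:ℝ), ∀ z, gGamma q (u s) z ≤ qmin / 2 := by
    have gbound' : ∀ s ∈ Set.Ici (0:ℝ), ∀ z, ∀ ε'' : ℝ, 0 < ε'' →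
        gGamma q (u s) z ≤ qmin / 2 + ε'' := by
      intro s hs z ε'' hε''
      set T : ℝ := s + 1 with hT
      set ε : ℝ := min (ε'' * rexp (-(C * s))) (rexp (-(C * T))) with hεdef
      have hεpos : 0 < ε := lt_min (by positivity) (exp_pos _)
      have hBd : ∀ r : ℝ, HasDerivAt (fun s' => qmin / 2 + ε * rexp (C * s'))
          (ε * (C * rexp (C * r))) r := by
        intro r
        have h1 : HasDerivAt (fun s' : ℝ => C * s') C r := by
          simpa using (hasDerivAt_id r).const_mul C
        have h2 := (h1.exp.const_mul ε).const_add (qmin / 2)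
        rw [show ε * (C * rexp (C * r)) = ε * (rexp (C * r) * C) by ring]
        exact h2
      have hinit : ∀ z' : V, gGamma q (u 0) z' ≤ qmin / 2 + ε * rexp (C * 0) := by
        intro z'
        have := h0 z'
        have h1 : (0:ℝ) < ε * rexp (C * 0) := by positivity
        linarith
      have hbd : ∀ τ ∈ Set.Ico (0:ℝ) T, ∀ z' : V,
          gGamma q (u τ) z' = qmin / 2 + ε * rexp (C * τ) →
          (∀ k, gGamma q (u τ) k ≤ gGamma q (u τ) z') →
          2 * gGammaBil q (u τ) (fun y => glap q (u τ) y + gGamma q (u τ) y) z'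
            < ε * (C * rexp (C * τ)) := by
        intro τ hτ z' hcontact hmaxz'
        set η : ℝ := ε * rexp (C * τ) with hηdef
        have hη0 : 0 < η := by positivity
        have hη1 : η ≤ 1 := by
          have h1 : ε ≤ rexp (-(C * T)) := min_le_right _ _
          have h2 : rexp (C * τ) ≤ rexp (C * T) := by
            apply exp_le_exp.2
            have hττ : τ ≤ T := hτ.2.le
            nlinarith
          calc η ≤ rexp (-(C * T)) * rexp (C * T) :=
                mul_le_mul h1 h2 (exp_pos _).le (exp_pos _).le
            _ = 1 := by rw [← Real.exp_add]; simp
        have hkey := keyA q hq qmin hqmin_pos hqmin hCD (u τ) z' η hη0 hη1 hcontact hmaxz'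
        have hlt : (S * ((qmin / 2 + 1) / qmin)) * η < C * η := by
          have : S * ((qmin / 2 + 1) / qmin) < C := by rw [hC]; linarith
          exact mul_lt_mul_of_pos_right this hη0
        calc 2 * gGammaBil q (u τ) (fun y => glap q (u τ) y + gGamma q (u τ) y) z'
            ≤ (S * ((qmin / 2 + 1) / qmin)) * η := hkey
          _ < C * η := hlt
          _ = ε * (C * rexp (C * τ)) := by rw [hηdef]; ring
      have happ := maxPrinciple (T := T)
        (fun z' r => gGamma q (u r) z')
        (fun z' r => 2 * gGammaBil q (u r) (fun y => glap q (u r) y + gGamma q (u r) y) z')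
        (fun r => qmin / 2 + ε * rexp (C * r)) (fun r => ε * (C * rexp (C * r)))
        (fun z' r hr => hG r hr z') hBd hinit hbd
        (t := s) ⟨hs, by rw [hT]; linarith⟩ z
      have hfin : ε * rexp (C * s) ≤ ε'' := by
        have h1 : ε ≤ ε'' * rexp (-(C * s)) := min_le_left _ _
        calc ε * rexp (C * s) ≤ (ε'' * rexp (-(C * s))) * rexp (C * s) :=
              mul_le_mul_of_nonneg_right h1 (exp_pos _).le
          _ = ε'' * (rexp (-(C * s)) * rexp (C * s)) := by ring
          _ = ε'' := by rw [← Real.exp_add]; simp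
      calc gGamma q (u s) z ≤ qmin / 2 + ε * rexp (C * s) := happ
        _ ≤ qmin / 2 + ε'' := by linarith
    intro s hs z
    by_contra hcon
    push_neg at hcon
    have := gbound' s hs z ((gGamma q (u s) z - qmin / 2) / 2) (by linarith)
    linarith
  -- Step 2: t Γu_t + u_t ≤ ε for every ε > 0
  have Fbound : ∀ ε'' : ℝ, 0 < ε'' → t * gGamma q (u t) x + u t x ≤ ε'' := by
    intro ε'' hε''
    set ε : ℝ := ε'' * rexp (-t) with hεdef
    have hεpos : 0 < ε := by positivity
    have hfd : ∀ z : V, ∀ r ∈ Set.Ici (0:ℝ),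
        HasDerivWithinAt (fun s' => s' * gGamma q (u s') z + u s' z)
          (1 * gGamma q (u r) z
            + r * (2 * gGammaBil q (u r) (fun y => glap q (u r) y + gGamma q (u r) y) z)
            + (glap q (u r) z + gGamma q (u r) z)) (Set.Ici 0) r := by
      intro z r hr
      exact ((hasDerivWithinAt_id r (Set.Ici 0)).mul (hG r hr z)).add (hu r hr z)
    have hBd : ∀ r : ℝ, HasDerivAt (fun s' : ℝ => ε * rexp s') (ε * rexp r) r :=
      fun r => (Real.hasDerivAt_exp r).const_mul ε
    have hinit : ∀ z : V, (0:ℝ) * gGamma q (u 0) z + u 0 z ≤ ε * rexp 0 := by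
      intro z
      have h1 : (0:ℝ) < ε * rexp 0 := by positivity
      have := hneg z
      nlinarith
    have hbd : ∀ τ ∈ Set.Ico (0:ℝ) (t + 1), ∀ z : V,
        τ * gGamma q (u τ) z + u τ z = ε * rexp τ →
        (∀ k, τ * gGamma q (u τ) k + u τ k ≤ τ * gGamma q (u τ) z + u τ z) →
        1 * gGamma q (u τ) z
          + τ * (2 * gGammaBil q (u τ) (fun y => glap q (u τ) y + gGamma q (u τ) y) z)
          + (glap q (u τ) z + gGamma q (u τ) z) < ε * rexp τ := by
      intro τ hτ z _ hmaxz
      have hd := keyB q hq qmin hqmin_pos hqmin hCD (u τ) τ hτ.1 z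
        (fun z' => gbound τ (Set.mem_Ici.2 hτ.1) z') hmaxz
      have h1 : (0:ℝ) < ε * rexp τ := by positivity
      linarith
    have happ := maxPrinciple (T := t + 1)
      (fun z r => r * gGamma q (u r) z + u r z)
      (fun z r => 1 * gGamma q (u r) z
        + r * (2 * gGammaBil q (u r) (fun y => glap q (u r) y + gGamma q (u r) y) z)
        + (glap q (u r) z + gGamma q (u r) z))
      (fun r => ε * rexp r) (fun r => ε * rexp r)
      (fun z r hr => hfd z r hr) hBd hinit hbd
      (t := t) ⟨ht.le, by linarith⟩ x
    calc t * gGamma q (u t) x + u t x ≤ ε * rexp t := happ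
      _ = ε'' * (rexp (-t) * rexp t) := by rw [hεdef]; ring
      _ = ε'' := by rw [← Real.exp_add]; simp
  have hF : t * gGamma q (u t) x + u t x ≤ 0 := by
    by_contra hcon
    push_neg at hcon
    have := Fbound ((t * gGamma q (u t) x + u t x) / 2) (by linarith)
    linarith
  rw [le_div_iff₀ ht]
  linarith [mul_comm (gGamma q (u t) x) t]
end

section
/- Let (V,q) be a finite weighted graph satisfying CD(K,∞) for some K > 0, and let (u_t) solve ∂_t u_t = Δu_t + Γu_t with u_0 ≤ 0 and Γu_0 ≤ q_min/2. Then for all t > 0, Γu_t ≤ −u_t·2K/(e^{2Kt} − 1) pointwise. -/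
open Finset Real

/-! Both steps are the parabolic maximum principle on the finite vertex set, driven by one sign
fact: at a vertex `x` where a function `w` is maximal and every edge has `|v y - v x| ≤ 1`,
`Δw + 2Γ(v, w) = ∑ q x y (w y - w x) (1 + v y - v x) ≤ 0`; and `Γv x ≤ q_min/2` forces those
edge bounds.

First, `Γu` evolves by `∂Γu = Δ(Γu) + 2Γ(u, Γu) - 2Γ₂u`, so at a vertex where `Γu` reaches the level
`q_min/2` it strictly decreases by CD(K,∞); hence `Γu ≤ q_min/2` for all times.

Second, `F = φ Γu + u` with `φ(t) = (e^{2Kt} - 1)/(2K)` satisfies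
`∂F = ΔF + 2Γ(u, F) + (φ' - 1 - 2Kφ) Γu - 2φ (Γ₂u - K Γu)`, and `φ' = 1 + 2Kφ`, so `F` stays
below its initial value `u₀ ≤ 0`. Dividing `φ Γu ≤ -u` by `φ` is the estimate. -/

open Set Filter Topology

section MaximumPrinciple

variable {ι : Type*} [Fintype ι] [Nonempty ι]

lemma eventually_slope_sup'_lt {g : ι → ℝ → ℝ} {g' : ι → ℝ} {t r : ℝ}
    (hg : ∀ i, HasDerivWithinAt (g i) (g' i) (Ici t) t)
    (hr : ∀ i, (∀ j, g j t ≤ g i t) → g' i < r) :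
    ∀ᶠ z in 𝓝[>] t, slope (fun s => univ.sup' univ_nonempty (g · s)) t z < r := by
  set M : ℝ → ℝ := fun s => univ.sup' univ_nonempty (g · s)
  have hle : ∀ i s, g i s ≤ M s := fun i s => le_sup' (g · s) (mem_univ i)
  have below : ∀ i, ∀ᶠ z in 𝓝[>] t, g i z < M t + r * (z - t) := by
    intro i
    by_cases hmax : ∀ j, g j t ≤ g i t
    · have hslope : ∀ᶠ z in 𝓝[>] t, slope (g i) t z < r :=
        (hasDerivWithinAt_iff_tendsto_slope' (lt_irrefl t)).1 (hg i).Ioi_of_Ici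
          (Iio_mem_nhds (hr i hmax))
      filter_upwards [hslope, self_mem_nhdsWithin] with z hz hzt
      rw [slope_def_field, div_lt_iff₀ (sub_pos.2 hzt)] at hz
      linarith [hle i t]
    · obtain ⟨j, hj⟩ := not_forall.1 hmax
      have hlt : g i t < M t := (lt_of_not_ge hj).trans_le (hle j t)
      have hgi : Tendsto (g i) (𝓝[>] t) (𝓝 (g i t)) :=
        (hg i).continuousWithinAt.tendsto.mono_left (nhdsWithin_mono t Ioi_subset_Ici_self)
      have hline : Tendsto (fun z => M t + r * (z - t)) (𝓝[>] t) (𝓝 (M t)) := by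
        have : Continuous fun z => M t + r * (z - t) := by fun_prop
        simpa using (this.tendsto t).mono_left nhdsWithin_le_nhds
      exact hgi.eventually_lt hline hlt
  filter_upwards [eventually_all.2 below, self_mem_nhdsWithin] with z hz hzt
  have hMz : M z < M t + r * (z - t) := (sup'_lt_iff _).2 fun i _ => hz i
  rw [slope_def_field, div_lt_iff₀ (sub_pos.2 hzt)]
  linarith

theorem image_le_of_deriv_lt_at_max {g g' : ι → ℝ → ℝ} {B B' : ℝ → ℝ} {a b : ℝ}
    (hg : ∀ i, ∀ t ∈ Icc a b, HasDerivWithinAt (g i) (g' i t) (Ici a) t)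
    (hB : ∀ t, HasDerivAt B (B' t) t) (ha : ∀ i, g i a ≤ B a)
    (bound : ∀ t ∈ Ico a b, ∀ i, (∀ j, g j t ≤ g i t) → g i t = B t → g' i t < B' t) :
    ∀ t ∈ Icc a b, ∀ i, g i t ≤ B t := by
  classical
  set M : ℝ → ℝ := fun s => univ.sup' univ_nonempty (g · s)
  have hle : ∀ i s, g i s ≤ M s := fun i s => le_sup' (g · s) (mem_univ i)
  set active : ℝ → Finset ι := fun s => univ.filter fun i => ∀ j, g j s ≤ g i s
  have hactive : ∀ s, (active s).Nonempty := fun s => by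
    obtain ⟨i, -, hi⟩ := exists_max_image univ (g · s) univ_nonempty
    exact ⟨i, by simpa [active] using hi⟩
  have hderiv : ∀ i, ∀ t ∈ Ico a b, HasDerivWithinAt (g i) (g' i t) (Ici t) t := fun i t ht =>
    (hg i t (Ico_subset_Icc_self ht)).mono (Ici_subset_Ici.2 ht.1)
  have hM : ∀ ⦃t⦄, t ∈ Icc a b → M t ≤ B t := by
    refine image_le_of_liminf_slope_right_lt_deriv_boundary
      (f' := fun s => (active s).sup' (hactive s) (g' · s))
      (ContinuousOn.finset_sup'_apply univ_nonempty fun i _ t ht =>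
        (hg i t ht).continuousWithinAt.mono Icc_subset_Ici_self) ?_
      (sup'_le _ _ fun i _ => ha i) hB ?_
    · intro t ht r hr
      refine (eventually_slope_sup'_lt (fun i => hderiv i t ht) fun i hi => ?_).frequently
      exact (le_sup' (g' · t) (by simpa [active] using hi)).trans_lt hr
    · intro t ht hMB
      obtain ⟨i, hi, hieq⟩ := exists_mem_eq_sup' (hactive t) (g' · t)
      have himax : ∀ j, g j t ≤ g i t := by simpa [active] using hi
      have hiM : g i t = M t := le_antisymm (hle i t) (sup'_le _ _ fun j _ => himax j)
      exact hieq ▸ bound t ht i himax (hiM.trans hMB)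
  exact fun t ht i => (hle i t).trans (hM ht)

end MaximumPrinciple

section GraphCalculus

variable {V : Type*} [Fintype V]

/-- The linearization at `v` of `u ↦ Δu + Γu`. -/
noncomputable def gLin (q : V → V → ℝ) (v w : V → ℝ) (x : V) : ℝ :=
  glap q w x + 2 * gGammaBil q v w x

lemma gLin_smul_add (q : V → V → ℝ) (v w₁ w₂ : V → ℝ) (c : ℝ) (x : V) :
    gLin q v (fun y => c * w₁ y + w₂ y) x = c * gLin q v w₁ x + gLin q v w₂ x := by
  simp only [gLin, glap, gGammaBil, mul_sum, ← sum_add_distrib]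
  exact sum_congr rfl fun y _ => by ring

lemma gLin_self (q : V → V → ℝ) (v : V → ℝ) (x : V) :
    gLin q v v x = glap q v x + 2 * gGamma q v x := rfl

lemma gLin_eq_sum (q : V → V → ℝ) (v w : V → ℝ) (x : V) :
    gLin q v w x = ∑ y, q x y * (w y - w x) * (1 + (v y - v x)) := by
  simp only [gLin, glap, gGammaBil, mul_sum, ← sum_add_distrib]
  exact sum_congr rfl fun y _ => by ring

lemma gLin_nonpos_of_isMax {q : V → V → ℝ} {v w : V → ℝ} {x : V} (hq : ∀ y, 0 ≤ q x y)
    (hv : ∀ y, 0 < q x y → |v y - v x| ≤ 1) (hw : ∀ y, w y ≤ w x) : gLin q v w x ≤ 0 := by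
  rw [gLin_eq_sum]
  refine sum_nonpos fun y _ => ?_
  rcases (hq y).lt_or_eq with hpos | hzero
  · have hv' : 0 ≤ 1 + (v y - v x) := by linarith [(abs_le.1 (hv y hpos)).1]
    exact mul_nonpos_of_nonpos_of_nonneg
      (mul_nonpos_of_nonneg_of_nonpos hpos.le (sub_nonpos.2 (hw y))) hv'
  · simp [← hzero]

lemma abs_sub_le_one_of_gGamma_le {q : V → V → ℝ} (hq : ∀ x y, 0 ≤ q x y) {qmin : ℝ}
    (hqmin : ∀ x y, 0 < q x y → qmin ≤ q x y) {f : V → ℝ} {x y : V}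
    (hf : gGamma q f x ≤ qmin / 2) (hxy : 0 < q x y) : |f y - f x| ≤ 1 := by
  have hterm :
      q x y * (f y - f x) * (f y - f x) ≤ ∑ z, q x z * (f z - f x) * (f z - f x) :=
    single_le_sum (f := fun z => q x z * (f z - f x) * (f z - f x))
      (fun z _ => by rw [mul_assoc]; exact mul_nonneg (hq x z) (mul_self_nonneg _)) (mem_univ y)
  rw [gGamma, gGammaBil] at hf
  rw [← sq_le_one_iff_abs_le_one]
  nlinarith [hqmin x y hxy, sq_nonneg (f y - f x)]

lemma hasDerivWithinAt_gGamma (q : V → V → ℝ) {u : ℝ → V → ℝ} {u' : V → ℝ} {s : Set ℝ} {t : ℝ}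
    (hu : ∀ x, HasDerivWithinAt (fun r => u r x) (u' x) s t) (x : V) :
    HasDerivWithinAt (fun r => gGamma q (u r) x) (2 * gGammaBil q (u t) u' x) s t := by
  have hsum : HasDerivWithinAt (fun r => ∑ y, q x y * (u r y - u r x) * (u r y - u r x))
      (∑ y, q x y * ((u' y - u' x) * (u t y - u t x) + (u t y - u t x) * (u' y - u' x)))
      s t :=
    HasDerivWithinAt.fun_sum fun y _ => by
      have hd := (hu y).fun_sub (hu x)
      simpa only [mul_assoc] using (hd.fun_mul hd).const_mul (q x y)
  refine (hsum.const_mul (1 / 2 : ℝ)).congr_deriv ?_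
  simp only [gGammaBil, mul_sum]
  exact sum_congr rfl fun y _ => by ring

end GraphCalculus

noncomputable def hamiltonPhi (K t : ℝ) : ℝ :=
  (exp (2 * K * t) - 1) / (2 * K)

lemma hamiltonPhi_zero (K : ℝ) : hamiltonPhi K 0 = 0 := by
  simp [hamiltonPhi]

lemma hamiltonPhi_nonneg (K : ℝ) {t : ℝ} (ht : 0 ≤ t) : 0 ≤ hamiltonPhi K t := by
  rcases le_total 0 K with hK | hK
  · exact div_nonneg (sub_nonneg.2 (one_le_exp (by positivity))) (by positivity)
  · exact div_nonneg_of_nonpos (sub_nonpos.2 (exp_le_one_iff.2 (by nlinarith))) (by linarith)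

lemma hamiltonPhi_pos {K t : ℝ} (hK : K ≠ 0) (ht : 0 < t) : 0 < hamiltonPhi K t := by
  rcases hK.lt_or_gt with hK | hK
  · exact div_pos_of_neg_of_neg (sub_neg.2 (exp_lt_one_iff.2 (by nlinarith))) (by linarith)
  · exact div_pos (sub_pos.2 (one_lt_exp_iff.2 (by positivity))) (by positivity)

lemma hasDerivAt_hamiltonPhi {K : ℝ} (hK : K ≠ 0) (t : ℝ) :
    HasDerivAt (hamiltonPhi K) (2 * K * hamiltonPhi K t + 1) t := by
  have h := ((((hasDerivAt_id t).const_mul (2 * K)).exp).sub_const 1).div_const (2 * K)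
  refine h.congr_deriv ?_
  simp only [hamiltonPhi, id]
  field_simp
  ring

section Flow

variable {V : Type*} [Fintype V] {q : V → V → ℝ}

lemma two_gGammaBil_glap_add_gGamma (v : V → ℝ) (x : V) :
    2 * gGammaBil q v (fun y => glap q v y + gGamma q v y) x
      = gLin q v (gGamma q v) x - 2 * gGammaTwo q v x := by
  have hsplit : gGammaBil q v (fun y => glap q v y + gGamma q v y) x
      = gGammaBil q v (glap q v) x + gGammaBil q v (gGamma q v) x := by
    simp only [gGammaBil, ← mul_add, ← sum_add_distrib]
    exact congrArg _ (sum_congr rfl fun y _ => by ring)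
  rw [hsplit, gLin, gGammaTwo]
  ring

lemma hasDerivWithinAt_gGamma_of_flow {u : ℝ → V → ℝ}
    (hu : ∀ t ∈ Ici (0 : ℝ), ∀ x, HasDerivWithinAt (fun s => u s x)
      (glap q (u t) x + gGamma q (u t) x) (Ici 0) t) {t : ℝ} (ht : 0 ≤ t) (x : V) :
    HasDerivWithinAt (fun s => gGamma q (u s) x)
      (gLin q (u t) (gGamma q (u t)) x - 2 * gGammaTwo q (u t) x) (Ici 0) t :=
  (hasDerivWithinAt_gGamma q (hu t ht) x).congr_deriv (two_gGammaBil_glap_add_gGamma _ x)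

lemma gGamma_le_of_flow {qmin K : ℝ} (hq : ∀ x y, 0 ≤ q x y)
    (hqmin : ∀ x y, 0 < q x y → qmin ≤ q x y) (hqmin_pos : 0 < qmin) (hK : 0 < K)
    (hCD : ∀ f : V → ℝ, ∀ x, K * gGamma q f x ≤ gGammaTwo q f x) {u : ℝ → V → ℝ}
    (hu : ∀ t ∈ Ici (0 : ℝ), ∀ x, HasDerivWithinAt (fun s => u s x)
      (glap q (u t) x + gGamma q (u t) x) (Ici 0) t)
    (h0 : ∀ x, gGamma q (u 0) x ≤ qmin / 2) {s : ℝ} (hs : 0 ≤ s) (x : V) :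
    gGamma q (u s) x ≤ qmin / 2 := by
  have : Nonempty V := ⟨x⟩
  refine image_le_of_deriv_lt_at_max (g := fun y r => gGamma q (u r) y) (B' := fun _ => 0)
    (fun y r hr => hasDerivWithinAt_gGamma_of_flow hu hr.1 y) (fun r => hasDerivAt_const r _) h0
    (fun r _ y hmax htouch => ?_) s ⟨hs, le_rfl⟩ x
  have hLin : gLin q (u r) (gGamma q (u r)) y ≤ 0 :=
    gLin_nonpos_of_isMax (hq y) (fun z => abs_sub_le_one_of_gGamma_le hq hqmin htouch.le) hmax
  have hcurv : 0 < K * gGamma q (u r) y := by rw [htouch]; positivity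
  linarith [hCD (u r) y]

lemma hamilton_deriv_nonpos_of_isMax {K c : ℝ} {v : V → ℝ} {x : V} (hq : ∀ y, 0 ≤ q x y)
    (hv : ∀ y, 0 < q x y → |v y - v x| ≤ 1) (hCD : K * gGamma q v x ≤ gGammaTwo q v x)
    (hc : 0 ≤ c) (hmax : ∀ y, c * gGamma q v y + v y ≤ c * gGamma q v x + v x) :
    (2 * K * c + 1) * gGamma q v x + c * (gLin q v (gGamma q v) x - 2 * gGammaTwo q v x)
      + (glap q v x + gGamma q v x) ≤ 0 := by
  have hLin := gLin_nonpos_of_isMax (w := fun y => c * gGamma q v y + v y) hq hv hmax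
  rw [gLin_smul_add, gLin_self] at hLin
  nlinarith [mul_le_mul_of_nonneg_left hCD hc]

lemma hamiltonPhi_mul_gGamma_add_nonpos_of_flow {qmin K : ℝ} (hq : ∀ x y, 0 ≤ q x y)
    (hqmin : ∀ x y, 0 < q x y → qmin ≤ q x y) (hK : K ≠ 0)
    (hCD : ∀ f : V → ℝ, ∀ x, K * gGamma q f x ≤ gGammaTwo q f x) {u : ℝ → V → ℝ}
    (hu : ∀ t ∈ Ici (0 : ℝ), ∀ x, HasDerivWithinAt (fun s => u s x)
      (glap q (u t) x + gGamma q (u t) x) (Ici 0) t)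
    (hneg : ∀ x, u 0 x ≤ 0) (hΓ : ∀ s, 0 ≤ s → ∀ x, gGamma q (u s) x ≤ qmin / 2)
    {s : ℝ} (hs : 0 ≤ s) (x : V) :
    hamiltonPhi K s * gGamma q (u s) x + u s x ≤ 0 := by
  have : Nonempty V := ⟨x⟩
  have hbarrier : ∀ ε > 0, hamiltonPhi K s * gGamma q (u s) x + u s x ≤ ε * s := fun ε hε =>
    image_le_of_deriv_lt_at_max (g := fun y r => hamiltonPhi K r * gGamma q (u r) y + u r y)
      (B := fun r => ε * r) (B' := fun _ => ε)
      (fun y r hr => ((hasDerivAt_hamiltonPhi hK r).hasDerivWithinAt.mul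
        (hasDerivWithinAt_gGamma_of_flow hu hr.1 y)).add (hu r hr.1 y))
      (fun r => by simpa using (hasDerivAt_id r).const_mul ε)
      (fun y => by simpa [hamiltonPhi_zero] using hneg y)
      (fun r hr y hmax _ => (hamilton_deriv_nonpos_of_isMax (hq y)
        (fun z => abs_sub_le_one_of_gGamma_le hq hqmin (hΓ r hr.1 y)) (hCD (u r) y)
        (hamiltonPhi_nonneg K hr.1) hmax).trans_lt hε)
      s ⟨hs, le_rfl⟩ x
  have hlim : Tendsto (fun ε => ε * s) (𝓝[>] 0) (𝓝 0) := by
    simpa using ((continuous_mul_const s).tendsto 0).mono_left nhdsWithin_le_nhds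
  exact ge_of_tendsto hlim (eventually_nhdsWithin_of_forall hbarrier)

end Flow

theorem hamilton_estimate_CD_K_infty_general {V : Type*} [Fintype V] (q : V → V → ℝ)
    (hq : ∀ x y, 0 ≤ q x y) (qmin K : ℝ) (hK : 0 < K)
    (hqmin_pos : 0 < qmin) (hqmin : ∀ x y, 0 < q x y → qmin ≤ q x y)
    (hCD : ∀ f : V → ℝ, ∀ x, K * gGamma q f x ≤ gGammaTwo q f x)
    (u : ℝ → V → ℝ)
    (hu : ∀ t ∈ Set.Ici (0 : ℝ), ∀ x, HasDerivWithinAt (fun s => u s x)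
      (glap q (u t) x + gGamma q (u t) x) (Set.Ici 0) t)
    (hneg : ∀ x, u 0 x ≤ 0)
    (h0 : ∀ x, gGamma q (u 0) x ≤ qmin / 2) :
    ∀ t : ℝ, 0 < t → ∀ x,
      gGamma q (u t) x ≤ -(u t x) * (2 * K) / (Real.exp (2 * K * t) - 1) := by
  intro t ht x
  have hΓ : ∀ s, 0 ≤ s → ∀ y, gGamma q (u s) y ≤ qmin / 2 := fun s hs =>
    gGamma_le_of_flow hq hqmin hqmin_pos hK hCD hu h0 hs
  have hφ := hamiltonPhi_mul_gGamma_add_nonpos_of_flow hq hqmin hK.ne' hCD hu hneg hΓ ht.le x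
  rw [← div_div_eq_mul_div]
  change gGamma q (u t) x ≤ -u t x / hamiltonPhi K t
  rw [le_div_iff₀ (hamiltonPhi_pos hK.ne' ht)]
  linarith

/-- Hamilton gradient estimate under CD(K,∞), K > 0: Γu_t ≤ −u_t · 2K/(e^{2Kt} − 1). -/
theorem hamilton_estimate_CD_K_infty {V : Type*} [Fintype V] (q : V → V → ℝ)
    (hq : ∀ x y, 0 ≤ q x y) (hdiag : ∀ x, q x x = 0) (qmin K : ℝ) (hK : 0 < K)
    (hqmin_pos : 0 < qmin) (hqmin : ∀ x y, 0 < q x y → qmin ≤ q x y)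
    (hCD : ∀ f : V → ℝ, ∀ x, K * gGamma q f x ≤ gGammaTwo q f x)
    (u : ℝ → V → ℝ)
    (hu : ∀ t ∈ Set.Ici (0 : ℝ), ∀ x, HasDerivWithinAt (fun s => u s x)
      (glap q (u t) x + gGamma q (u t) x) (Set.Ici 0) t)
    (hneg : ∀ x, u 0 x ≤ 0)
    (h0 : ∀ x, gGamma q (u 0) x ≤ qmin / 2) :
    ∀ t : ℝ, 0 < t → ∀ x,
      gGamma q (u t) x ≤ -(u t x) * (2 * K) / (Real.exp (2 * K * t) - 1) :=
  hamilton_estimate_CD_K_infty_general q hq qmin K hK hqmin_pos hqmin hCD u hu hneg h0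
end
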